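/- For any probability distribution μ on a finite alphabet of size M and any n ∈ ℕ with n ≥ 1, there exists a type ν ∈ T_n (an empirical distribution of some length-n sequence) with |μ(i) − ν(i)| ≤ 1/n for all i, supp(ν) ⊆ supp(μ), and hence total variation distance d_TV(μ, ν) ≤ M/(2n). -/

import Mathlib

/-!
Scale `μ` by `n` and round the partial sums `n · (μ 0 + ⋯ + μ (i-1))` down to integers.
The increments `k i` of the rounded partial sums are natural numbers that telescope to
`⌊n⌋ = n`, each differs from `n · μ i` by less than `1` (two floors, each off by less
than `1`), and `k i = 0` whenever `μ i = 0`. Then `ν i = k i / n` is the required type.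
-/

open Finset

theorem abs_sub_floor_add_sub_floor_lt_one (x y : ℝ) : |y - (⌊x + y⌋ - ⌊x⌋ : ℤ)| < 1 := by
  rw [abs_lt]
  push_cast
  constructor <;>
    linarith [Int.floor_le x, Int.lt_floor_add_one x, Int.floor_le (x + y),
      Int.lt_floor_add_one (x + y)]

noncomputable def cumulativeRound (a : ℕ → ℝ) (k : ℕ) : ℤ :=
  ⌊∑ j ∈ range (k + 1), a j⌋ - ⌊∑ j ∈ range k, a j⌋

section cumulativeRound

variable (a : ℕ → ℝ) {k : ℕ}

theorem sum_range_cumulativeRound (m : ℕ) :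
    ∑ k ∈ range m, cumulativeRound a k = ⌊∑ j ∈ range m, a j⌋ := by
  simp [cumulativeRound, sum_range_sub (fun k => ⌊∑ j ∈ range k, a j⌋)]

theorem abs_sub_cumulativeRound_lt_one (k : ℕ) : |a k - cumulativeRound a k| < 1 := by
  rw [cumulativeRound, sum_range_succ]
  exact abs_sub_floor_add_sub_floor_lt_one _ _

variable {a}

theorem cumulativeRound_nonneg (ha : 0 ≤ a k) : 0 ≤ cumulativeRound a k := by
  refine sub_nonneg.2 (Int.floor_mono ?_)
  rw [sum_range_succ]
  linarith

theorem cumulativeRound_eq_zero (ha : a k = 0) : cumulativeRound a k = 0 := by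
  simp [cumulativeRound, sum_range_succ, ha]

end cumulativeRound

theorem exists_nat_round_of_sum_eq_nat {M : ℕ} (a : Fin M → ℝ) (ha : ∀ i, 0 ≤ a i) (m : ℕ)
    (hsum : ∑ i, a i = m) :
    ∃ k : Fin M → ℕ, ∑ i, k i = m ∧ (∀ i, |a i - k i| < 1) ∧ ∀ i, a i = 0 → k i = 0 := by
  set b : ℕ → ℝ := fun j => if h : j < M then a ⟨j, h⟩ else 0
  have hb : ∀ i : Fin M, b i = a i := fun i => dif_pos i.isLt
  have hcast : ∀ i : Fin M, ((cumulativeRound b i).toNat : ℤ) = cumulativeRound b i :=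
    fun i => Int.toNat_of_nonneg (cumulativeRound_nonneg ((hb i).symm ▸ ha i))
  refine ⟨fun i => (cumulativeRound b i).toNat, ?_, fun i => ?_, fun i hi => ?_⟩
  · have hsumb : ∑ j ∈ range M, b j = m := by
      rw [← Fin.sum_univ_eq_sum_range, ← hsum]
      exact sum_congr rfl fun i _ => hb i
    suffices (∑ i : Fin M, ((cumulativeRound b i).toNat : ℤ)) = m by exact_mod_cast this
    simp only [hcast]
    rw [Fin.sum_univ_eq_sum_range (cumulativeRound b), sum_range_cumulativeRound, hsumb,
      Int.floor_natCast]
  · have : (((cumulativeRound b i).toNat : ℕ) : ℝ) = cumulativeRound b i := by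
      exact_mod_cast hcast i
    rw [this, ← hb]
    exact abs_sub_cumulativeRound_lt_one b i
  · simp [cumulativeRound_eq_zero ((hb i).trans hi)]

/-- For any probability distribution `μ` on an alphabet of size `M` and any `n ≥ 1`,
there is a type `ν` (a distribution whose probabilities are integer multiples of `1/n`)
with `|μ i - ν i| ≤ 1/n` for all `i`, `supp ν ⊆ supp μ`, and `d_TV(μ,ν) ≤ M/(2n)`. -/
theorem stmt18 (M n : ℕ) (hn : 0 < n) (μ : Fin M → ℝ)
    (hμ0 : ∀ i, 0 ≤ μ i) (hμ1 : ∑ i, μ i = 1) :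
    ∃ ν : Fin M → ℝ,
      (∀ i, ∃ k : ℕ, ν i = (k : ℝ) / n) ∧
      (∑ i, ν i = 1) ∧
      (∀ i, |μ i - ν i| ≤ 1 / n) ∧
      (∀ i, ν i ≠ 0 → μ i ≠ 0) ∧
      (1 / 2) * ∑ i, |μ i - ν i| ≤ M / (2 * n) := by
  have hn' : (0 : ℝ) < n := Nat.cast_pos.2 hn
  obtain ⟨k, hk_sum, hk_close, hk_zero⟩ :=
    exists_nat_round_of_sum_eq_nat (fun i => n * μ i) (fun i => mul_nonneg hn'.le (hμ0 i)) n
      (by rw [← mul_sum, hμ1, mul_one])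
  have hclose : ∀ i, |μ i - k i / n| ≤ 1 / n := fun i => by
    rw [← mul_div_cancel_left₀ (μ i) hn'.ne', ← sub_div, abs_div, abs_of_pos hn']
    exact div_le_div_of_nonneg_right (hk_close i).le hn'.le
  refine ⟨fun i => k i / n, fun i => ⟨k i, rfl⟩, ?_, hclose, fun i hν hμ => ?_, ?_⟩
  · rw [← sum_div, ← Nat.cast_sum, hk_sum, div_self hn'.ne']
  · simp [hk_zero i (by simp [hμ])] at hν
  · calc (1 / 2) * ∑ i, |μ i - k i / n| ≤ (1 / 2) * ∑ _i : Fin M, (1 / n : ℝ) := by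
          gcongr with i; exact hclose i
      _ = M / (2 * n) := by simp; ring
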